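/- For any ξ, η ∈ ℝ and u, v ∈ 𝔻, if |λ + 1| > 2ρ(u,v), where λ = e^{i(η−ξ)}·(1−ū·v)/(1−u·v̄) and ρ(u,v) = |(u−v)/(1−ū·v)|, then sup_{z∈𝔻} |f_{ξ,u}(z) − f_{η,v}(z)| = |(1 − 2ρ(u,v)² − 2i·ρ(u,v)·√(1−ρ(u,v)²)) − (Re λ + i·|Im λ|)|. -/

import Mathlib

/-!
Write `B_a z = (z - a) / (1 - ā z)`. With `a = B_v u` and `κ = 1 - ū v` one has
`B_u = (κ̄ / κ) · B_a ∘ B_v`, so substituting `w = B_v z` (a bijection of the disk) turns the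
difference into `e^{iη} (λ̄ B_a w - w)`, a function holomorphic on the closed disk; by the maximum
modulus principle its supremum is its maximum on the unit circle. For `|w| = 1`,
`|λ̄ B_a w - w| = |μ - λ|` with `μ = conj (1 - ā w) / (1 - ā w)`, and `μ` sweeps out the arc of
unit numbers with `Re μ ≥ cos α = 1 - 2ρ²`, where `α = 2 arcsin ρ`. The hypothesis
`|λ + 1| > 2ρ` says `α + |arg λ| < π`, so the point of this arc farthest from `λ` is the endpoint
on the side opposite to `λ`, at distance `|e^{-iα} - e^{i |arg λ|}|`, which is the stated value.
-/

open Complex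

noncomputable section

def unitDisk : Set ℂ := {z : ℂ | ‖z‖ < 1}

noncomputable def autMap (ξ : ℝ) (u z : ℂ) : ℂ :=
  Complex.exp (Complex.I * ξ) * ((z - u) / (1 - (starRingEnd ℂ) u * z))

noncomputable def pseudoHyp (u v : ℂ) : ℝ :=
  ‖((u - v) / (1 - (starRingEnd ℂ) u * v))‖

open ComplexConjugate Metric
open scoped Real

def blaschke (a z : ℂ) : ℂ := (z - a) / (1 - conj a * z)

lemma one_sub_conj_mul_ne_zero {a z : ℂ} (ha : ‖a‖ < 1) (hz : ‖z‖ ≤ 1) : 1 - conj a * z ≠ 0 := by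
  intro h
  have : ‖conj a * z‖ < 1 := by
    rw [norm_mul, norm_conj]; nlinarith [norm_nonneg a, norm_nonneg z]
  rw [← sub_eq_zero.mp h, norm_one] at this
  exact lt_irrefl _ this

lemma normSq_one_sub_conj_mul_sub_normSq_sub (a z : ℂ) :
    normSq (1 - conj a * z) - normSq (z - a) = (1 - normSq a) * (1 - normSq z) := by
  simp only [normSq_apply, sub_re, sub_im, mul_re, mul_im, one_re, one_im, conj_re, conj_im]
  ring

lemma norm_blaschke_lt_one {a z : ℂ} (ha : ‖a‖ < 1) (hz : ‖z‖ < 1) : ‖blaschke a z‖ < 1 := by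
  rw [blaschke, norm_div, div_lt_one (norm_pos_iff.mpr (one_sub_conj_mul_ne_zero ha hz.le)),
    ← sq_lt_sq₀ (norm_nonneg _) (norm_nonneg _), ← normSq_eq_norm_sq, ← normSq_eq_norm_sq,
    ← sub_pos, normSq_one_sub_conj_mul_sub_normSq_sub, normSq_eq_norm_sq, normSq_eq_norm_sq]
  apply mul_pos <;> nlinarith [norm_nonneg a, norm_nonneg z]

lemma blaschke_neg_blaschke {a z : ℂ} (ha : ‖a‖ < 1) (hz : ‖z‖ ≤ 1) :
    blaschke (-a) (blaschke a z) = z := by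
  have hD := one_sub_conj_mul_ne_zero ha hz
  have ha' := one_sub_conj_mul_ne_zero ha ha.le
  rw [blaschke, blaschke, map_neg, sub_neg_eq_add, neg_mul, sub_neg_eq_add, div_add' _ _ _ hD,
    mul_div_assoc', one_add_div hD, div_div_div_cancel_right₀ hD,
    div_eq_iff (by contrapose! ha'; linear_combination ha')]
  ring

lemma blaschke_eq_mul_blaschke_blaschke {u v z : ℂ} (hu : ‖u‖ < 1) (hv : ‖v‖ < 1)
    (hz : ‖z‖ ≤ 1) :
    blaschke u z =
      (1 - u * conj v) / (1 - conj u * v) * blaschke (blaschke v u) (blaschke v z) := by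
  have hvz := one_sub_conj_mul_ne_zero hv hz
  have huz := one_sub_conj_mul_ne_zero hu hz
  have huv := one_sub_conj_mul_ne_zero hu hv.le
  have hvv := one_sub_conj_mul_ne_zero hv hv.le
  have hvu : 1 - u * conj v ≠ 0 := by rw [mul_comm]; exact one_sub_conj_mul_ne_zero hv hu.le
  have hvz' : 1 - z * conj v ≠ 0 := by rwa [mul_comm]
  have hnum : blaschke v z - blaschke v u =
      (z - u) * (1 - conj v * v) / ((1 - conj v * z) * (1 - u * conj v)) := by
    rw [blaschke, blaschke, mul_comm u, div_sub_div _ _ hvz (by rwa [mul_comm])]; ring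
  have hden : 1 - conj (blaschke v u) * blaschke v z =
      (1 - conj u * z) * (1 - conj v * v) / ((1 - conj v * z) * (1 - conj u * v)) := by
    rw [blaschke, blaschke, map_div₀, map_sub, map_sub, map_one, map_mul, conj_conj,
      div_mul_div_comm, one_sub_div (mul_ne_zero (by rwa [mul_comm]) hvz)]
    ring
  conv_rhs => rw [blaschke, hnum, hden]
  rw [blaschke]
  field_simp

lemma differentiableOn_blaschke {a : ℂ} (ha : ‖a‖ < 1) :
    DifferentiableOn ℂ (blaschke a) (closedBall 0 1) :=
  (differentiableOn_id.sub_const a).div (by fun_prop) fun _ hz ↦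
    one_sub_conj_mul_ne_zero ha (by simpa using hz)

lemma iSup_unitDisk_comp_blaschke {v : ℂ} (hv : ‖v‖ < 1) (F : ℂ → ℝ) :
    ⨆ z : unitDisk, F (blaschke v z) = ⨆ w : unitDisk, F w := by
  have hv' : ‖-v‖ < 1 := by rwa [norm_neg]
  have hsurj : Function.Surjective fun z : unitDisk ↦
      (⟨blaschke v z, norm_blaschke_lt_one hv z.2⟩ : unitDisk) := by
    rintro ⟨w, hw⟩
    refine ⟨⟨blaschke (-v) w, norm_blaschke_lt_one hv' hw⟩, Subtype.ext ?_⟩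
    simpa using blaschke_neg_blaschke hv' hw.le
  exact hsurj.iSup_comp fun w : unitDisk ↦ F w

lemma blaschke_mul_conj_of_norm_eq_one (a : ℂ) {w : ℂ} (hw : ‖w‖ = 1) :
    blaschke a w * conj w = conj (1 - conj a * w) / (1 - conj a * w) := by
  have hww : w * conj w = 1 := by simp [mul_conj', hw]
  rw [blaschke, div_mul_eq_mul_div, map_sub, map_one, map_mul, conj_conj]
  congr 1
  linear_combination hww

lemma norm_conj_mul_blaschke_sub_of_norm_eq_one (a : ℂ) {ν w : ℂ} (hν : ‖ν‖ = 1)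
    (hw : ‖w‖ = 1) :
    ‖conj ν * blaschke a w - w‖ = ‖conj (1 - conj a * w) / (1 - conj a * w) - ν‖ := by
  have hνν : ν * conj ν = 1 := by simp [mul_conj', hν]
  have hww : w * conj w = 1 := by simp [mul_conj', hw]
  rw [← blaschke_mul_conj_of_norm_eq_one a hw]
  calc ‖conj ν * blaschke a w - w‖ = ‖(conj ν * blaschke a w - w) * (ν * conj w)‖ := by
        rw [norm_mul _ (ν * conj w), norm_mul, norm_conj, hν, hw, mul_one, mul_one]
    _ = ‖blaschke a w * conj w - ν‖ := by
        congr 1; linear_combination blaschke a w * conj w * hνν - ν * hww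

lemma one_sub_two_mul_norm_sq_le_re_conj_div (b : ℂ) :
    1 - 2 * ‖b‖ ^ 2 ≤ (conj (1 - b) / (1 - b)).re := by
  rcases eq_or_ne (1 - b) 0 with h | h
  · have hb : b = 1 := by linear_combination -h
    simp [hb]
  rw [div_re, conj_re, conj_im, ← add_div, le_div_iff₀ (normSq_pos.mpr h), ← normSq_eq_norm_sq]
  simp only [normSq_apply, sub_re, sub_im, one_re, one_im]
  -- after clearing the denominator the two sides differ by `2 (Re b - |b|²)²`
  nlinarith [sq_nonneg (b.re - (b.re * b.re + b.im * b.im))]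

lemma norm_exp_mul_I_sub_exp_mul_I_sq (x y : ℝ) :
    ‖exp (x * I) - exp (y * I)‖ ^ 2 = 2 - 2 * Real.cos (x - y) := by
  rw [← normSq_eq_norm_sq, exp_mul_I, exp_mul_I, ← ofReal_cos, ← ofReal_sin, ← ofReal_cos,
    ← ofReal_sin, normSq_apply]
  simp only [sub_re, add_re, sub_im, add_im, ofReal_re, ofReal_im, mul_re, mul_im, I_re, I_im]
  rw [Real.cos_sub]
  linear_combination Real.sin_sq_add_cos_sq x + Real.sin_sq_add_cos_sq y

lemma exp_mul_I_eq_of_norm_eq_one {μ : ℂ} (hμ : ‖μ‖ = 1) : exp (arg μ * I) = μ := by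
  simpa [hμ] using norm_mul_exp_arg_mul_I μ

lemma cos_add_le_cos_sub {x y α θ : ℝ} (hx : |x| ≤ α) (hy : |y| ≤ θ) (h : α + θ ≤ π) :
    Real.cos (α + θ) ≤ Real.cos (x - y) := by
  rw [← Real.cos_abs (x - y)]
  exact Real.cos_le_cos_of_nonneg_of_le_pi (abs_nonneg _) h
    ((abs_sub _ _).trans (add_le_add hx hy))

lemma abs_arg_le_of_cos_le_re {μ : ℂ} (hμ : ‖μ‖ = 1) {α : ℝ} (hα : 0 ≤ α)
    (h : Real.cos α ≤ μ.re) : |arg μ| ≤ α := by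
  by_contra! hlt
  have := Real.cos_lt_cos_of_nonneg_of_le_pi hα (abs_arg_le_pi μ) hlt
  rw [Real.cos_abs, cos_arg (norm_ne_zero_iff.mp (by rw [hμ]; norm_num)), hμ, div_one] at this
  linarith

lemma abs_arg_lt_pi_sub_of_neg_cos_lt_re {ν : ℂ} (hν : ‖ν‖ = 1) {α : ℝ} (hαπ : α ≤ π)
    (h : -Real.cos α < ν.re) : |arg ν| < π - α := by
  by_contra! hle
  have := Real.cos_le_cos_of_nonneg_of_le_pi (by linarith) (abs_arg_le_pi ν) hle
  rw [Real.cos_abs, cos_arg (norm_ne_zero_iff.mp (by rw [hν]; norm_num)), hν, div_one,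
    Real.cos_pi_sub] at this
  linarith

lemma norm_sub_le_of_cos_le_re {μ ν : ℂ} (hμ : ‖μ‖ = 1) (hν : ‖ν‖ = 1) {α : ℝ} (hα : 0 ≤ α)
    (hμα : Real.cos α ≤ μ.re) (hαν : α + |arg ν| ≤ π) :
    ‖μ - ν‖ ≤ ‖exp (↑(-α) * I) - exp (↑|arg ν| * I)‖ := by
  conv_lhs => rw [← exp_mul_I_eq_of_norm_eq_one hμ, ← exp_mul_I_eq_of_norm_eq_one hν]
  rw [← pow_le_pow_iff_left₀ (norm_nonneg _) (norm_nonneg _) two_ne_zero,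
    norm_exp_mul_I_sub_exp_mul_I_sq, norm_exp_mul_I_sub_exp_mul_I_sq, neg_sub_left, Real.cos_neg,
    add_comm]
  linarith [cos_add_le_cos_sub (abs_arg_le_of_cos_le_re hμ hα hμα) le_rfl hαν]

lemma exp_neg_two_arcsin_mul_I {ρ : ℝ} (h₀ : -1 ≤ ρ) (h₁ : ρ ≤ 1) :
    exp (↑(-(2 * Real.arcsin ρ)) * I) = 1 - 2 * (ρ : ℂ) ^ 2 - 2 * I * ρ * (√(1 - ρ ^ 2) : ℂ) := by
  rw [exp_mul_I, ← ofReal_cos, ← ofReal_sin, Real.cos_neg, Real.sin_neg, Real.cos_two_mul,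
    Real.sin_two_mul, Real.cos_arcsin, Real.sin_arcsin h₀ h₁, Real.sq_sqrt (by nlinarith)]
  push_cast; ring

lemma exp_abs_arg_mul_I {ν : ℂ} (hν : ‖ν‖ = 1) :
    exp (↑|arg ν| * I) = ν.re + I * (|ν.im| : ℝ) := by
  rcases le_or_gt 0 ν.im with h | h
  · rw [abs_of_nonneg (arg_nonneg_iff.mpr h), abs_of_nonneg h, exp_mul_I_eq_of_norm_eq_one hν]
    apply Complex.ext <;> simp
  · rw [abs_of_neg (arg_neg_iff.mpr h), abs_of_neg h, ofReal_neg, neg_mul,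
      show -(↑(arg ν) * I) = conj (↑(arg ν) * I) by simp, exp_conj,
      exp_mul_I_eq_of_norm_eq_one hν]
    apply Complex.ext <;> simp

lemma exists_norm_eq_one_conj_div_eq_exp {a : ℂ} (ha : ‖a‖ < 1) {σ : ℝ} (hσ : σ = 1 ∨ σ = -1) :
    ∃ w : ℂ, ‖w‖ = 1 ∧
      conj (1 - conj a * w) / (1 - conj a * w) = exp (↑(σ * (2 * Real.arcsin ‖a‖)) * I) := by
  set ρ := ‖a‖
  set e := exp (↑(σ * Real.arcsin ρ) * I)
  have hs : 0 < √(1 - ρ ^ 2) := Real.sqrt_pos.mpr (by nlinarith [norm_nonneg a])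
  have hs2 : (√(1 - ρ ^ 2) : ℂ) ^ 2 = 1 - ρ ^ 2 := by
    norm_cast; exact Real.sq_sqrt (by nlinarith [norm_nonneg a])
  have hσ2 : (σ : ℂ) ^ 2 = 1 := by rcases hσ with rfl | rfl <;> norm_num
  have hconje : conj e = √(1 - ρ ^ 2) - σ * ρ * I := by
    have h₀ : -1 ≤ ρ := by linarith [norm_nonneg a]
    rw [← exp_conj, map_mul, conj_ofReal, conj_I, mul_neg, ← neg_mul, ← ofReal_neg, exp_mul_I,
      ← ofReal_cos, ← ofReal_sin]
    rcases hσ with rfl | rfl <;> simp [Real.cos_arcsin, Real.sin_arcsin h₀ ha.le, sub_eq_add_neg]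
  have hee : e * conj e = 1 := by rw [mul_conj', norm_exp_ofReal_mul_I]; norm_num
  have harg : conj a * exp (arg a * I) = ρ := by
    nth_rw 1 [← norm_mul_exp_arg_mul_I a]
    rw [map_mul, conj_ofReal, mul_assoc, mul_comm (conj _), mul_conj', norm_exp_ofReal_mul_I]
    simp [ρ]
  -- this `w` makes `1 - ā w = √(1 - ρ²) · ē`, so that `μ = e / ē = e²`
  refine ⟨σ * I * exp (arg a * I) * conj e, ?_, ?_⟩
  · rw [norm_mul, norm_mul, norm_mul, norm_conj, norm_exp_ofReal_mul_I, norm_exp_ofReal_mul_I,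
      norm_I, norm_real]
    rcases hσ with rfl | rfl <;> norm_num
  have hD : 1 - conj a * (σ * I * exp (arg a * I) * conj e) = √(1 - ρ ^ 2) * conj e := by
    rw [show conj a * (σ * I * exp (arg a * I) * conj e)
        = σ * I * (conj a * exp (arg a * I)) * conj e by ring, harg, hconje]
    linear_combination ((ρ : ℂ) ^ 2 * I ^ 2) * hσ2 - hs2 + ρ ^ 2 * I_sq
  have hexp : exp (↑(σ * (2 * Real.arcsin ρ)) * I) = e * e := by
    rw [← exp_add]; push_cast; ring_nf
  rw [hD, map_mul, conj_ofReal, conj_conj, mul_div_mul_left _ _ (by exact_mod_cast hs.ne'),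
    div_eq_iff (by rintro h; simp [h] at hee), hexp, mul_assoc, hee, mul_one]

lemma iSup_unitDisk_norm_eq {f : ℂ → ℂ} (hf : DiffContOnCl ℂ f (ball 0 1)) {M : ℝ}
    (hM : ∀ w, ‖w‖ = 1 → ‖f w‖ ≤ M) {w₀ : ℂ} (hw₀ : ‖w₀‖ = 1) (hfw₀ : ‖f w₀‖ = M) :
    ⨆ z : unitDisk, ‖f z‖ = M := by
  have hle : ∀ z : ℂ, ‖z‖ ≤ 1 → ‖f z‖ ≤ M := fun z hz ↦
    Complex.norm_le_of_forall_mem_frontier_norm_le isBounded_ball hf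
      (fun w hw ↦ hM w (by simpa [frontier_ball _ one_ne_zero] using hw))
      (by simpa [closure_ball _ one_ne_zero] using hz)
  have : Nonempty unitDisk := ⟨⟨0, by simp [unitDisk]⟩⟩
  have hbdd : BddAbove (Set.range fun z : unitDisk ↦ ‖f z‖) :=
    ⟨M, by rintro _ ⟨z, rfl⟩; exact hle z z.2.le⟩
  refine le_antisymm (ciSup_le fun z ↦ hle z z.2.le) ?_
  have hw₀cl : w₀ ∈ closure (ball (0 : ℂ) 1) := by simp [closure_ball _ one_ne_zero, hw₀]
  have himage : (fun z ↦ ‖f z‖) '' ball 0 1 ⊆ Set.Iic (⨆ z : unitDisk, ‖f z‖) := by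
    rintro _ ⟨z, hz, rfl⟩
    exact le_ciSup hbdd ⟨z, by simpa [unitDisk] using hz⟩
  rw [← hfw₀]
  exact closure_minimal himage isClosed_Iic
    (hf.continuousOn.norm.image_closure (Set.mem_image_of_mem _ hw₀cl))

theorem iSup_norm_conj_mul_blaschke_sub {a ν : ℂ} (ha : ‖a‖ < 1) (hν : ‖ν‖ = 1)
    (h : 2 * ‖a‖ < ‖ν + 1‖) :
    ⨆ w : unitDisk, ‖conj ν * blaschke a w - w‖
      = ‖(1 - 2 * (‖a‖ : ℂ) ^ 2 - 2 * I * ‖a‖ * (√(1 - ‖a‖ ^ 2) : ℂ))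
          - (ν.re + I * (|ν.im| : ℝ))‖ := by
  have ha₀ := norm_nonneg a
  set α := 2 * Real.arcsin ‖a‖ with hα
  have hα₀ : 0 ≤ α := by positivity [Real.arcsin_nonneg.mpr ha₀]
  have hαπ : α ≤ π := by linarith [Real.arcsin_le_pi_div_two ‖a‖]
  have hcos : Real.cos α = 1 - 2 * ‖a‖ ^ 2 := by
    rw [hα, Real.cos_two_mul, Real.cos_arcsin, Real.sq_sqrt (by nlinarith)]; ring
  have hαν : α + |arg ν| ≤ π := by
    have hsq : ‖ν + 1‖ ^ 2 = 2 + 2 * ν.re := by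
      rw [← normSq_eq_norm_sq, normSq_add, normSq_one, normSq_eq_norm_sq, hν]; simp; ring
    linarith [abs_arg_lt_pi_sub_of_neg_cos_lt_re hν hαπ (by nlinarith)]
  rw [← exp_neg_two_arcsin_mul_I (by linarith) ha.le, ← exp_abs_arg_mul_I hν]
  -- the far endpoint of the arc is `e^{-iα}` if `arg ν ≥ 0` and `e^{iα}` otherwise
  set σ : ℝ := if 0 ≤ arg ν then -1 else 1 with hσ
  obtain ⟨w₀, hw₀, hμ₀⟩ := exists_norm_eq_one_conj_div_eq_exp ha (σ := σ) (by
    rw [hσ]; split_ifs <;> simp)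
  refine iSup_unitDisk_norm_eq (f := fun w ↦ conj ν * blaschke a w - w) ?_ (fun w hw ↦ ?_) hw₀ ?_
  · exact (((differentiableOn_blaschke ha).const_mul _).sub differentiableOn_id).diffContOnCl_ball
      subset_rfl
  · have hD := one_sub_conj_mul_ne_zero ha hw.le
    have hre := one_sub_two_mul_norm_sq_le_re_conj_div (conj a * w)
    rw [norm_mul, norm_conj, hw, mul_one, ← hcos] at hre
    rw [norm_conj_mul_blaschke_sub_of_norm_eq_one a hν hw]
    exact norm_sub_le_of_cos_le_re
      (by rw [norm_div, norm_conj, div_self (norm_ne_zero_iff.mpr hD)]) hν hα₀ hre hαν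
  · rw [norm_conj_mul_blaschke_sub_of_norm_eq_one a hν hw₀, hμ₀]
    conv_lhs => rw [← exp_mul_I_eq_of_norm_eq_one hν]
    rw [← sq_eq_sq₀ (norm_nonneg _) (norm_nonneg _), norm_exp_mul_I_sub_exp_mul_I_sq,
      norm_exp_mul_I_sub_exp_mul_I_sq, hσ]
    split_ifs with h
    · rw [abs_of_nonneg h]; ring_nf
    · rw [abs_of_neg (not_le.mp h), ← Real.cos_neg]; ring_nf

lemma autMap_sub_autMap {ξ η : ℝ} {u v z : ℂ} (hu : ‖u‖ < 1) (hv : ‖v‖ < 1) (hz : ‖z‖ ≤ 1) :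
    autMap ξ u z - autMap η v z = exp (I * η) *
      (conj (exp (I * (η - ξ)) * ((1 - conj u * v) / (1 - u * conj v)))
        * blaschke (blaschke v u) (blaschke v z) - blaschke v z) := by
  change exp (I * ξ) * blaschke u z - exp (I * η) * blaschke v z = _
  have hexp : exp (I * η) * conj (exp (I * (η - ξ))) = exp (I * ξ) := by
    rw [← exp_conj, ← exp_add]; congr 1; simp; ring
  rw [blaschke_eq_mul_blaschke_blaschke hu hv hz, ← hexp]
  simp only [map_mul, map_div₀, map_sub, map_one, conj_conj]
  ring

theorem dist_formula_case
    (ξ η : ℝ) (u v : ℂ) (hu : u ∈ unitDisk) (hv : v ∈ unitDisk)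
    (hcond : ‖(Complex.exp (Complex.I * (η - ξ))
          * ((1 - (starRingEnd ℂ) u * v) / (1 - u * (starRingEnd ℂ) v)) + 1)‖
      > 2 * pseudoHyp u v) :
    (⨆ z : unitDisk, ‖(autMap ξ u z - autMap η v z)‖)
      = ‖((1 - 2 * (pseudoHyp u v : ℂ) ^ 2
              - 2 * Complex.I * (pseudoHyp u v : ℂ)
                * (Real.sqrt (1 - pseudoHyp u v ^ 2) : ℂ))
            - (((Complex.exp (Complex.I * (η - ξ))
                  * ((1 - (starRingEnd ℂ) u * v) / (1 - u * (starRingEnd ℂ) v))).re : ℂ)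
               + Complex.I
                  * (((|(Complex.exp (Complex.I * (η - ξ))
                      * ((1 - (starRingEnd ℂ) u * v)
                          / (1 - u * (starRingEnd ℂ) v))).im| : ℝ)) : ℂ)))‖ := by
  set ν := exp (I * (η - ξ)) * ((1 - conj u * v) / (1 - u * conj v))
  have hu' : ‖u‖ < 1 := hu
  have hv' : ‖v‖ < 1 := hv
  have hρ : pseudoHyp u v = ‖blaschke v u‖ := by
    rw [pseudoHyp, blaschke, norm_div, norm_div, ← norm_conj (1 - conj v * u)]
    simp [mul_comm]
  have hν : ‖ν‖ = 1 := by
    have hconj : conj (1 - conj u * v) = 1 - u * conj v := by simp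
    rw [norm_mul, show (η : ℂ) - ξ = ((η - ξ : ℝ) : ℂ) by push_cast; ring, norm_exp_I_mul_ofReal,
      norm_div, ← hconj, norm_conj,
      div_self (norm_ne_zero_iff.mpr (one_sub_conj_mul_ne_zero hu' hv'.le)), one_mul]
  rw [hρ] at hcond ⊢
  calc ⨆ z : unitDisk, ‖autMap ξ u z - autMap η v z‖
      = ⨆ z : unitDisk, ‖conj ν * blaschke (blaschke v u) (blaschke v z) - blaschke v z‖ := by
        refine iSup_congr fun z ↦ ?_
        rw [autMap_sub_autMap hu' hv' z.2.le, norm_mul, norm_exp_I_mul_ofReal, one_mul]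
    _ = ⨆ w : unitDisk, ‖conj ν * blaschke (blaschke v u) w - w‖ :=
        iSup_unitDisk_comp_blaschke hv' fun w ↦ ‖conj ν * blaschke (blaschke v u) w - w‖
    _ = _ := iSup_norm_conj_mul_blaschke_sub (norm_blaschke_lt_one hv' hu') hν hcond
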